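/- arXiv:1909.11437 — 2 statements merged into one kernel-verified Lean document; each statement's English description precedes it below -/
import Mathlib

section
/- Let p be a prime, let k be a field of characteristic p, and let R = k[X]/(X^p − 1). Then the first André–Quillen homology H¹Cotangent of R over k (the first homology of the cotangent complex of R over k) is a free R-module of rank 1. (This computes the degree −1 part of the co-Lie complex of μ_p in characteristic p, showing coLie(μ_p) ≅ O ⊕ O[1] as an object of D(k).) -/
/-!
Present `R = k[X]/(f)` with `f = X^p - 1`. As `f` is a non-zero-divisor of `k[X]`, the conormal
module `I/I²` of `I = (f)` is free on the class of `f`, and the differential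
`I/I² → R ⊗ Ω[k[X]/k]` of the naive cotangent complex sends it to `df = p X^(p-1) dX = 0`.
Hence the differential vanishes and `H¹ = I/I² ≅ R`.
-/

open Polynomial

namespace Algebra.Extension

variable {R S : Type*} [CommRing R] [CommRing S] [Algebra R S]

noncomputable def h1CotangentEquivCotangentOfCotangentComplexEqZero (P : Extension R S)
    (h : P.cotangentComplex = 0) : P.H1Cotangent ≃ₗ[S] P.Cotangent :=
  LinearEquiv.ofTop _ (LinearMap.ker_eq_top.mpr h)

variable {P : Extension R S} {f : P.Ring}

noncomputable abbrev Cotangent.mkGenerator (hker : P.ker = Ideal.span {f}) : P.Cotangent :=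
  Cotangent.mk ⟨f, hker ▸ Ideal.mem_span_singleton_self f⟩

lemma span_cotangentMkGenerator_eq_top (hker : P.ker = Ideal.span {f}) :
    Submodule.span S {Cotangent.mkGenerator hker} = ⊤ := by
  simpa only [Set.range_unique] using
    Cotangent.span_eq_top_of_span_eq_ker (fun _ : Unit ↦ f) (by rwa [Set.range_const, eq_comm])

lemma cotangentComplex_eq_zero_of_D_eq_zero (hker : P.ker = Ideal.span {f})
    (hD : KaehlerDifferential.D R P.Ring f = 0) : P.cotangentComplex = 0 :=
  LinearMap.ext_on (span_cotangentMkGenerator_eq_top hker) <| by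
    rintro _ rfl
    rw [cotangentComplex_mk, LinearMap.zero_apply]
    exact congrArg _ hD |>.trans (TensorProduct.tmul_zero _ _)

lemma eq_zero_of_smul_cotangentMkGenerator_eq_zero (hker : P.ker = Ideal.span {f})
    (hf : f ∈ nonZeroDivisors P.Ring) {s : S} (hs : s • Cotangent.mkGenerator hker = 0) :
    s = 0 := by
  obtain ⟨a, rfl⟩ := P.algebraMap_surjective s
  have haf : a * f ∈ Ideal.span {f ^ 2} := by
    rw [algebraMap_smul, ← map_smul, Cotangent.mk_eq_zero_iff] at hs
    rwa [← Ideal.span_singleton_pow, ← hker]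
  obtain ⟨b, hb⟩ := Ideal.mem_span_singleton'.mp haf
  have ha : a = f * b := by
    rw [← mul_cancel_left_mem_nonZeroDivisors hf]
    linear_combination -hb
  rw [← RingHom.mem_ker, ← Extension.ker, hker, ha]
  exact Ideal.mul_mem_right _ _ (Ideal.mem_span_singleton_self f)

noncomputable def basisCotangentOfKerEqSpanSingleton (hker : P.ker = Ideal.span {f})
    (hf : f ∈ nonZeroDivisors P.Ring) : Module.Basis Unit S P.Cotangent :=
  (Module.Basis.singleton Unit S).map <| LinearEquiv.ofBijective
    (LinearMap.toSpanSingleton S _ (Cotangent.mkGenerator hker))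
    ⟨injective_iff_map_eq_zero _ |>.mpr fun _ ↦
        eq_zero_of_smul_cotangentMkGenerator_eq_zero hker hf,
      LinearMap.range_eq_top.mp <| by
        rw [← LinearMap.span_singleton_eq_range, span_cotangentMkGenerator_eq_top]⟩

end Algebra.Extension

lemma Algebra.Presentation.ker_eq_span_relation {R S ι : Type*} [CommRing R] [CommRing S]
    [Algebra R S] (P : Presentation R S ι Unit) :
    P.toExtension.ker = Ideal.span {P.relation ()} := by
  rw [← Set.range_const (ι := Unit), P.span_range_relation_eq_ker]

lemma Derivation.map_pow_char {R A M : Type*} [CommSemiring R] [CommSemiring A] [AddCommMonoid M]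
    [Algebra R A] [Module A M] [Module R M] (p : ℕ) [CharP A p] (D : Derivation R A M) (a : A) :
    D (a ^ p) = 0 := by
  rw [D.leibniz_pow, ← Nat.cast_smul_eq_nsmul A, CharP.cast_eq_zero, zero_smul]

namespace Polynomial

variable {R : Type*} [CommRing R] (q : R[X])

noncomputable def presentationQuotientSpanSingleton :
    Algebra.Presentation R (R[X] ⧸ Ideal.span {q}) Unit Unit :=
  (Algebra.Presentation.naive
      (v := fun _ : Unit ↦ (MvPolynomial.uniqueAlgEquiv R Unit).symm q)).ofAlgEquiv
    (Ideal.quotientEquivAlg _ _ (MvPolynomial.uniqueAlgEquiv R Unit) <| by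
      rw [Ideal.map_span, Set.range_const, Set.image_singleton]
      exact congrArg _ (congrArg _ (AlgEquiv.apply_symm_apply _ q).symm))

@[simp]
lemma relation_presentationQuotientSpanSingleton :
    (presentationQuotientSpanSingleton q).relation () =
      (MvPolynomial.uniqueAlgEquiv R Unit).symm q :=
  rfl

end Polynomial

open Algebra.Extension in
/-- For a prime `p` and a field `k` of characteristic `p`, with `R = k[X]/(X^p − 1)`,
the first André–Quillen homology `H¹Cotangent` of `R` over `k` (the first homology of
the cotangent complex of `R` over `k`) is a free `R`-module of rank `1`. -/
theorem h1Cotangent_mu_p_free_rank_one (p : ℕ) (hp : p.Prime)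
    (k : Type*) [Field k] [CharP k p] :
    Nonempty (Module.Basis Unit (k[X] ⧸ Ideal.span {(X : k[X]) ^ p - 1})
      (Algebra.H1Cotangent k (k[X] ⧸ Ideal.span {(X : k[X]) ^ p - 1}))) := by
  set P := presentationQuotientSpanSingleton ((X : k[X]) ^ p - 1)
  have hrel : P.relation () = MvPolynomial.X () ^ p - 1 := by simp [P]
  have hf : P.relation () ∈ nonZeroDivisors (MvPolynomial Unit k) :=
    mem_nonZeroDivisors_of_ne_zero <| (map_ne_zero_iff _ (AlgEquiv.injective _)).mpr <| by
      simpa using X_pow_sub_C_ne_zero hp.pos (1 : k)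
  have hD : KaehlerDifferential.D k (MvPolynomial Unit k) (P.relation ()) = 0 := by
    rw [hrel, map_sub, Derivation.map_pow_char p, Derivation.map_one_eq_zero, sub_zero]
  exact ⟨(basisCotangentOfKerEqSpanSingleton P.ker_eq_span_relation hf).map <|
    (h1CotangentEquivCotangentOfCotangentComplexEqZero _
      (cotangentComplex_eq_zero_of_D_eq_zero P.ker_eq_span_relation hD)).symm ≪≫ₗ
      P.equivH1Cotangent⟩
end

section
/- Let k be a field, let m ≥ 2 be a natural number, let R = k[X]/(X^m), and regard k as an R-module via the k-algebra homomorphism R → k sending X̄ to 0. Then for every natural number n, the Ext group Ext^n_R(k, k) is a one-dimensional k-vector space (equivalently, there is an additive isomorphism Ext^n_R(k, k) ≅ k). (For m = p = char k, this computes the coherent cohomology H^n(Bα_p, O), which is one-dimensional in every degree n ≥ 0.) -/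
/-!
If `a * r = 0 ↔ b ∣ r` and `b * r = 0 ↔ a ∣ r` in a commutative ring `R`, then
`⋯ → R --a--> R --b--> R --a--> R → R ⧸ (a) → 0` is a free resolution. Applying `Hom(-, N)` for
a module `N` killed by `a` and `b` gives a complex with zero differentials, so
`Extⁿ(R ⧸ (a), N) ≅ Hom(R, N) ≅ N` in every degree. In `k[X] ⧸ (X ^ m)` the elements `X` and
`X ^ (m - 1)` form such a pair, the residue field is the quotient by `X`, and both act on it by
zero because `m ≥ 2`.
-/

open Polynomial CategoryTheory

universe u

noncomputable def HomologicalComplex.homologyIsoXOfDEqZero {C ι : Type*} [Category C]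
    [Limits.HasZeroMorphisms C] {c : ComplexShape ι} (K : HomologicalComplex C c)
    (hK : ∀ i j, K.d i j = 0) (i : ι) [K.HasHomology i] : K.homology i ≅ K.X i :=
  (K.isoHomologyπ (c.prev i) i rfl (hK _ _)).symm ≪≫ K.iCyclesIso i (c.next i) rfl (hK _ _)

section CommRing

variable {R : Type u} [CommRing R]

lemma ModuleCat.ofHom_lsmul_comp_eq_zero_iff (c : R) {N : ModuleCat R}
    (g : ModuleCat.of R R ⟶ N) : ModuleCat.ofHom (LinearMap.lsmul R R c) ≫ g = 0 ↔ g c = 0 := by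
  rw [ModuleCat.hom_ext_iff, LinearMap.ext_ring_iff]
  simp

structure IsExactPair (a b : R) : Prop where
  mul_fst_eq_zero_iff : ∀ r, a * r = 0 ↔ b ∣ r
  mul_snd_eq_zero_iff : ∀ r, b * r = 0 ↔ a ∣ r

namespace IsExactPair

variable {a b : R} (h : IsExactPair a b)
include h

lemma symm : IsExactPair b a := ⟨h.mul_snd_eq_zero_iff, h.mul_fst_eq_zero_iff⟩

lemma mul_eq_zero : a * b = 0 := (h.mul_fst_eq_zero_iff b).2 dvd_rfl

lemma exact_lsmul : (ShortComplex.mk (ModuleCat.ofHom (LinearMap.lsmul R R a))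
    (ModuleCat.ofHom (LinearMap.lsmul R R b)) (by ext; simpa using h.symm.mul_eq_zero)).Exact := by
  rw [ShortComplex.moduleCat_exact_iff]
  intro (r : R) hr
  obtain ⟨s, rfl⟩ := (h.mul_snd_eq_zero_iff r).1 hr
  exact ⟨s, rfl⟩

/-- `d (n + 1) n` is multiplication by `a` for even `n` and by `b` for odd `n`. -/
noncomputable abbrev periodicComplex : ChainComplex (ModuleCat R) ℕ :=
  HomologicalComplex.alternatingConst (ModuleCat.of R R)
    (φ := ModuleCat.ofHom (LinearMap.lsmul R R b)) (ψ := ModuleCat.ofHom (LinearMap.lsmul R R a))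
    (by ext; simpa using h.mul_eq_zero) (by ext; simpa using h.symm.mul_eq_zero)
    fun _ _ => ComplexShape.down_nat_odd_add

instance (n : ℕ) : Projective (h.periodicComplex.X n) :=
  (IsProjective.iff_projective (R := R) R).mp inferInstance

lemma exactAt_periodicComplex_succ (n : ℕ) : h.periodicComplex.ExactAt (n + 1) := by
  rw [HomologicalComplex.exactAt_iff' _ (n + 2) (n + 1) n (by simp) (by simp)]
  rcases Nat.even_or_odd (n + 1) with hn | hn
  · exact (ShortComplex.exact_iff_of_iso (HomologicalComplex.alternatingConstScIsoEven _ _ _ _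
      (by simp) (by simp) hn)).2 h.exact_lsmul
  · exact (ShortComplex.exact_iff_of_iso (HomologicalComplex.alternatingConstScIsoOdd _ _ _ _
      (by simp) (by simp) hn)).2 h.symm.exact_lsmul

variable {M : Type u} [AddCommGroup M] [Module R M] (φ : R →ₗ[R] M)

noncomputable def projectiveResolution (hφ : Function.Surjective φ)
    (hker : ∀ r, φ r = 0 ↔ a ∣ r) : ProjectiveResolution (ModuleCat.of R M) where
  complex := h.periodicComplex
  π := (ChainComplex.toSingle₀Equiv _ _).symm ⟨ModuleCat.ofHom φ,
    (ModuleCat.ofHom_lsmul_comp_eq_zero_iff a _).2 ((hker a).2 dvd_rfl)⟩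
  quasiIso := ⟨fun n => by
    cases n with
    | zero =>
      rw [ChainComplex.quasiIsoAt₀_iff, ShortComplex.quasiIso_iff_of_zeros' _ rfl rfl rfl,
        ShortComplex.moduleCat_exact_iff, ModuleCat.epi_iff_surjective]
      refine ⟨fun (r : R) hr => ?_, hφ⟩
      obtain ⟨s, rfl⟩ := (hker r).1 hr
      exact ⟨s, rfl⟩
    | succ n =>
      rw [quasiIsoAt_iff_exactAt' (hL := ChainComplex.exactAt_succ_single_obj ..)]
      exact h.exactAt_periodicComplex_succ n⟩

variable {N : Type u} [AddCommGroup N] [Module R N]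

lemma linearYonedaObj_periodicComplex_d_eq_zero (haN : ∀ x : N, a • x = 0)
    (hbN : ∀ x : N, b • x = 0) (i j : ℕ) :
    (h.periodicComplex.linearYonedaObj R (ModuleCat.of R N)).d i j = 0 := by
  rcases eq_or_ne j (i + 1) with rfl | hij
  · ext (g : ModuleCat.of R R ⟶ ModuleCat.of R N)
    have lsmul_comp {c : R} (hc : ∀ x : N, c • x = 0) :
        ModuleCat.ofHom (LinearMap.lsmul R R c) ≫ g = 0 :=
      (ModuleCat.ofHom_lsmul_comp_eq_zero_iff c g).2
        (by simpa using (g.hom.map_smul c 1).trans (hc _))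
    change h.periodicComplex.d (i + 1) i ≫ g = 0
    simp only [HomologicalComplex.alternatingConst_d, ComplexShape.down_Rel, if_true]
    split_ifs
    exacts [lsmul_comp hbN, lsmul_comp haN]
  · exact HomologicalComplex.shape _ _ _ (by simpa [eq_comm] using hij)

noncomputable def extIso (hφ : Function.Surjective φ) (hker : ∀ r, φ r = 0 ↔ a ∣ r)
    (haN : ∀ x : N, a • x = 0) (hbN : ∀ x : N, b • x = 0) (n : ℕ) :
    ((Ext R (ModuleCat R) n).obj (Opposite.op (ModuleCat.of R M))).obj (ModuleCat.of R N) ≅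
      ModuleCat.of R N :=
  (h.projectiveResolution φ hφ hker).isoExt n _ ≪≫
    HomologicalComplex.homologyIsoXOfDEqZero _
      (h.linearYonedaObj_periodicComplex_d_eq_zero haN hbN) n ≪≫
    (ModuleCat.homLinearEquiv.trans (LinearMap.ringLmapEquivSelf R R N)).toModuleIso

end IsExactPair

namespace Ideal.Quotient

lemma mk_dvd_mk_iff_of_dvd {b c : R} (hbc : b ∣ c) (p : R) :
    mk (span {c}) b ∣ mk (span {c}) p ↔ b ∣ p := by
  refine ⟨fun ⟨s, hs⟩ => ?_, map_dvd _⟩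
  obtain ⟨q, rfl⟩ := mk_surjective s
  rw [← map_mul, Ideal.Quotient.eq, mem_span_singleton] at hs
  simpa using dvd_add (hbc.trans hs) (dvd_mul_right b q)

lemma mk_mul_eq_zero_iff_mk_dvd {a b c : R} (ha : IsLeftRegular a) (hab : a * b = c)
    (r : R ⧸ span {c}) : mk (span {c}) a * r = 0 ↔ mk (span {c}) b ∣ r := by
  obtain ⟨p, rfl⟩ := mk_surjective r
  rw [mk_dvd_mk_iff_of_dvd ⟨a, by rw [← hab, mul_comm]⟩, ← map_mul, eq_zero_iff_mem,
    mem_span_singleton, ← hab, ha.dvd_cancel_left]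

lemma isExactPair_mk {a b c : R} (ha : IsLeftRegular a) (hb : IsLeftRegular b)
    (hab : a * b = c) : IsExactPair (mk (span {c}) a) (mk (span {c}) b) :=
  ⟨mk_mul_eq_zero_iff_mk_dvd ha hab, mk_mul_eq_zero_iff_mk_dvd hb (by rw [mul_comm, hab])⟩

end Ideal.Quotient

end CommRing

lemma Polynomial.algHom_quotient_span_X_pow_eq_zero_iff {A : Type*} [CommRing A] [IsReduced A]
    {m : ℕ} (hm : m ≠ 0) (f : A[X] ⧸ Ideal.span {(X : A[X]) ^ m} →ₐ[A] A)
    (r : A[X] ⧸ Ideal.span {(X : A[X]) ^ m}) : f r = 0 ↔ Ideal.Quotient.mk _ X ∣ r := by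
  have hXm : Ideal.Quotient.mk (Ideal.span {(X : A[X]) ^ m}) X ^ m = 0 := by
    rw [← map_pow, Ideal.Quotient.eq_zero_iff_mem]
    exact Ideal.mem_span_singleton_self _
  have hfX : f (Ideal.Quotient.mk _ X) = 0 := (IsNilpotent.map ⟨m, hXm⟩ f).eq_zero
  obtain ⟨p, rfl⟩ := Ideal.Quotient.mk_surjective r
  have hfp : f (Ideal.Quotient.mk _ p) = p.coeff 0 := by
    rw [coeff_zero_eq_aeval_zero, ← hfX, ← Ideal.Quotient.mkₐ_eq_mk A, aeval_algHom_apply,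
      aeval_algHom_apply, aeval_X_left_apply]
  rw [hfp, Ideal.Quotient.mk_dvd_mk_iff_of_dvd (dvd_pow_self X hm), X_dvd_iff]

theorem ext_self_quotient_one_dimensional_general (k : Type) [Field k] (m : ℕ) (hm : 2 ≤ m)
    (f : (k[X] ⧸ Ideal.span {(X : k[X]) ^ m}) →ₐ[k] k)
    [Module (k[X] ⧸ Ideal.span {(X : k[X]) ^ m}) k]
    (hsmul : ∀ (r : k[X] ⧸ Ideal.span {(X : k[X]) ^ m}) (a : k), r • a = f r * a)
    (n : ℕ) :
    Nonempty
      (((Ext (k[X] ⧸ Ideal.span {(X : k[X]) ^ m})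
            (ModuleCat (k[X] ⧸ Ideal.span {(X : k[X]) ^ m})) n).obj
          (Opposite.op (ModuleCat.of (k[X] ⧸ Ideal.span {(X : k[X]) ^ m}) k))).obj
        (ModuleCat.of (k[X] ⧸ Ideal.span {(X : k[X]) ^ m}) k) ≃+ k) := by
  have hpair : IsExactPair (Ideal.Quotient.mk (Ideal.span {(X : k[X]) ^ m}) X)
      (Ideal.Quotient.mk _ (X ^ (m - 1))) :=
    Ideal.Quotient.isExactPair_mk isRegular_X.left (isRegular_X_pow _).left
      (by rw [← pow_succ']; congr 1; omega)
  have hker := algHom_quotient_span_X_pow_eq_zero_iff (by omega) f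
  let φ := LinearMap.toSpanSingleton (k[X] ⧸ Ideal.span {(X : k[X]) ^ m}) k 1
  have hφ (r) : φ r = f r := by simp [φ, hsmul]
  have hφ_surj : Function.Surjective φ := fun c => ⟨algebraMap k _ c, by simp [hφ]⟩
  have hX_smul (c : k) : Ideal.Quotient.mk (Ideal.span {(X : k[X]) ^ m}) X • c = 0 := by
    rw [hsmul, (hker _).2 dvd_rfl, zero_mul]
  have hX_pow_smul (c : k) :
      Ideal.Quotient.mk (Ideal.span {(X : k[X]) ^ m}) (X ^ (m - 1)) • c = 0 := by
    rw [hsmul, (hker _).2 (map_dvd _ (dvd_pow_self X (by omega))), zero_mul]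
  exact ⟨(hpair.extIso φ hφ_surj (by simpa [hφ] using hker) hX_smul hX_pow_smul n)
    |>.toLinearEquiv.toAddEquiv⟩

/-- Let `k` be a field, `m ≥ 2`, `R = k[X]/(X^m)`, and regard `k` as an `R`-module via
the `k`-algebra homomorphism `R → k` sending `X̄` to `0` (i.e. `r • a = f r * a`). Then
for every `n : ℕ`, the Ext group `Ext^n_R(k, k)` is one-dimensional over `k`, i.e. there
is an additive isomorphism `Ext^n_R(k, k) ≃+ k`. -/
theorem ext_self_quotient_one_dimensional (k : Type) [Field k] (m : ℕ) (hm : 2 ≤ m)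
    (f : (k[X] ⧸ Ideal.span {(X : k[X]) ^ m}) →ₐ[k] k)
    (hf : f (Ideal.Quotient.mk (Ideal.span {(X : k[X]) ^ m}) X) = 0)
    [Module (k[X] ⧸ Ideal.span {(X : k[X]) ^ m}) k]
    (hsmul : ∀ (r : k[X] ⧸ Ideal.span {(X : k[X]) ^ m}) (a : k), r • a = f r * a)
    (n : ℕ) :
    Nonempty
      (((Ext (k[X] ⧸ Ideal.span {(X : k[X]) ^ m})
            (ModuleCat (k[X] ⧸ Ideal.span {(X : k[X]) ^ m})) n).obj
          (Opposite.op (ModuleCat.of (k[X] ⧸ Ideal.span {(X : k[X]) ^ m}) k))).obj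
        (ModuleCat.of (k[X] ⧸ Ideal.span {(X : k[X]) ^ m}) k) ≃+ k) :=
  ext_self_quotient_one_dimensional_general k m hm f hsmul n
end
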